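/- Let G be a simple graph on vertex set Fin n with adjacency matrix A, let τ be the least eigenvalue of A, and suppose the edge set of G is partitioned into bars B and struts S (no cables). Let P be an n×d real matrix whose columns span the τ-eigenspace of A (i.e., AP = τP and every vector v with Av = τv lies in the column space of P), and let p_1,…,p_n be the rows of P (a generalized least eigenvalue framework of G). Then the framework is universally completable — i.e., for every m and every q : Fin n → ℝ^m with ⟨q_i,q_i⟩ = ⟨p_i,p_i⟩ for all i, ⟨q_i,q_j⟩ = ⟨p_i,p_j⟩ for all ij ∈ B, and ⟨q_i,q_j⟩ ≤ ⟨p_i,p_j⟩ for all ij ∈ S, one has Gram(q) = Gram(p) — if and only if every symmetric d×d real matrix R whose column space is contained in span(p_1,…,p_n) and which satisfies p_iᵀ R p_j = 0 whenever i = j or i is adjacent to j, must equal 0. -/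

import Mathlib

/-!
Put `Z = A - τ • 1`, which is positive semidefinite with `Z P = 0`. For a completion `q`, the sum
`∑ᵢⱼ Zᵢⱼ ⟨qᵢ, qⱼ⟩` is `∑ₖ qₖᵀ Z qₖ ≥ 0` over the columns `qₖ` of `q`; since `Z P = 0` and
`⟨qᵢ, qᵢ⟩ = ⟨pᵢ, pᵢ⟩`, it is also `∑ᵢⱼ Aᵢⱼ (⟨qᵢ, qⱼ⟩ - ⟨pᵢ, pⱼ⟩) ≤ 0`. So it vanishes: every
column of `q` is a `τ`-eigenvector, hence `q = P C`, and every edge constraint is tight. Then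
`Gram(q) - Gram(p) = P (C Cᵀ - 1) Pᵀ`, and compressing `C Cᵀ - 1` by the orthogonal projection
onto `span (pᵢ)` gives a matrix `R` as in the statement, which must vanish.

Conversely, for a nonzero such `R` and small `ε > 0`, write `1 + ε R = Mᵀ M`; then `qᵢ = M pᵢ`
satisfies every constraint with equality while `Gram(q) - Gram(p) = ε P R Pᵀ ≠ 0`.
-/

open Matrix

section

variable {ι κ μ : Type*} [Fintype κ]

lemma dotProduct_sum_vecMulVec_mulVec [Fintype μ] (v : μ → κ → ℝ) (x y : κ → ℝ) :
    x ⬝ᵥ (∑ k, vecMulVec (v k) (v k)) *ᵥ y = (fun k => x ⬝ᵥ v k) ⬝ᵥ (fun k => y ⬝ᵥ v k) := by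
  simp only [sum_mulVec, dotProduct_sum, vecMulVec_mulVec, dotProduct_smul, op_smul_eq_mul,
    dotProduct_comm (v _) y]
  rfl

open scoped MatrixOrder in
lemma exists_pos_posSemidef_one_add_smul [DecidableEq κ] {R : Matrix κ κ ℝ}
    (hR : R.IsHermitian) : ∃ ε : ℝ, 0 < ε ∧ (1 + ε • R).PosSemidef := by
  obtain ⟨r, hr⟩ := R.finite_spectrum.bddBelow
  set c : ℝ := max (-r) 1
  have hc : 0 < c := lt_max_of_lt_right one_pos
  have hRc : algebraMap ℝ _ (-c) ≤ R :=
    (algebraMap_le_iff_le_spectrum (a := R) hR).mpr fun x hx =>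
      (neg_le.mpr (le_max_left _ _)).trans (hr hx)
  refine ⟨c⁻¹, inv_pos.mpr hc, ?_⟩
  have hdecomp : 1 + c⁻¹ • R = c⁻¹ • (R - algebraMap ℝ _ (-c)) := by
    rw [Algebra.algebraMap_eq_smul_one, smul_sub, smul_smul, mul_neg, inv_mul_cancel₀ hc.ne',
      neg_smul, one_smul, sub_neg_eq_add, add_comm]
  rw [hdecomp]
  exact (sub_nonneg.mpr hRc).posSemidef.smul (inv_pos.mpr hc).le

lemma eq_zero_of_mem_span_of_forall_dotProduct_eq_zero [Fintype ι] {p : ι → κ → ℝ} {x : κ → ℝ}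
    (hx : x ∈ Submodule.span ℝ (Set.range p)) (h : ∀ i, p i ⬝ᵥ x = 0) : x = 0 := by
  obtain ⟨c, rfl⟩ := Submodule.mem_span_range_iff_exists_fun ℝ |>.mp hx
  refine dotProduct_self_eq_zero.mp ?_
  simp [sum_dotProduct, h]

lemma eq_zero_of_forall_dotProduct_mulVec_eq_zero [Fintype ι] {p : ι → κ → ℝ} {R : Matrix κ κ ℝ}
    (hR : R.IsSymm) (hcol : ∀ w, R *ᵥ w ∈ Submodule.span ℝ (Set.range p))
    (h : ∀ i j, p i ⬝ᵥ R *ᵥ p j = 0) : R = 0 := by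
  have hRp : ∀ j, R *ᵥ p j = 0 := fun j =>
    eq_zero_of_mem_span_of_forall_dotProduct_eq_zero (hcol _) (h · j)
  have hRR : ∀ w, R *ᵥ R *ᵥ w = 0 := fun w => by
    obtain ⟨c, hc⟩ := Submodule.mem_span_range_iff_exists_fun ℝ |>.mp (hcol w)
    simp [← hc, mulVec_sum, mulVec_smul, hRp]
  refine ext_iff_mulVec.mpr fun w => ?_
  rw [zero_mulVec, ← dotProduct_self_eq_zero]
  calc (R *ᵥ w) ⬝ᵥ (R *ᵥ w) = w ⬝ᵥ Rᵀ *ᵥ R *ᵥ w := by rw [dotProduct_mulVec w, vecMul_transpose]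
    _ = 0 := by rw [hR.eq, hRR, dotProduct_zero]

lemma exists_isSymm_projection [DecidableEq κ] (W : Submodule ℝ (κ → ℝ)) :
    ∃ π : Matrix κ κ ℝ, π.IsSymm ∧ (∀ v, π *ᵥ v ∈ W) ∧ ∀ w ∈ W, π *ᵥ w = w := by
  let U : Submodule ℝ (EuclideanSpace ℝ κ) := W.comap (WithLp.linearEquiv 2 ℝ (κ → ℝ)).toLinearMap
  let π := toEuclideanLin.symm U.starProjection.toLinearMap
  have hπ : ∀ v, π *ᵥ v = (U.starProjection (WithLp.toLp 2 v)).ofLp := fun v =>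
    congrArg WithLp.ofLp
      (LinearMap.congr_fun (toEuclideanLin.apply_symm_apply U.starProjection.toLinearMap) _)
  refine ⟨π, ?_, fun v => ?_, fun w hw => ?_⟩
  · rw [← isHermitian_iff_isSymm, ← isSymmetric_toEuclideanLin_iff]
    simpa [π] using U.starProjection_isSymmetric
  · rw [hπ]; exact U.starProjection_apply_mem _
  · rw [hπ, U.starProjection_eq_self_iff.mpr hw]

lemma exists_isSymm_mulVec_mem_span_dotProduct_mulVec_eq [DecidableEq κ] (p : ι → κ → ℝ)
    {X : Matrix κ κ ℝ} (hX : X.IsSymm) :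
    ∃ R : Matrix κ κ ℝ, R.IsSymm ∧ (∀ w, R *ᵥ w ∈ Submodule.span ℝ (Set.range p)) ∧
      ∀ i j, p i ⬝ᵥ R *ᵥ p j = p i ⬝ᵥ X *ᵥ p j := by
  obtain ⟨π, hπ, hπmem, hπfix⟩ := exists_isSymm_projection (Submodule.span ℝ (Set.range p))
  have hπp : ∀ i, π *ᵥ p i = p i := fun i => hπfix _ (Submodule.subset_span ⟨i, rfl⟩)
  refine ⟨π * X * π, ?_, fun w => ?_, fun i j => ?_⟩
  · simp only [IsSymm, transpose_mul, hπ.eq, hX.eq, mul_assoc]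
  · rw [← mulVec_mulVec, ← mulVec_mulVec]; exact hπmem _
  · rw [← mulVec_mulVec, hπp, ← mulVec_mulVec, dotProduct_mulVec, ← mulVec_transpose, hπ.eq, hπp]

lemma sum_mul_dotProduct_eq_sum_dotProduct_mulVec [Fintype ι] [Fintype μ] (Z : Matrix ι ι ℝ)
    (q : ι → μ → ℝ) :
    ∑ i, ∑ j, Z i j * (q i ⬝ᵥ q j) = ∑ k, (fun i => q i k) ⬝ᵥ Z *ᵥ fun i => q i k := by
  simp only [dotProduct, mulVec, Finset.mul_sum]
  rw [Finset.sum_congr rfl fun _ _ => Finset.sum_comm, Finset.sum_comm]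
  exact Finset.sum_congr rfl fun k _ => Finset.sum_congr rfl fun a _ =>
    Finset.sum_congr rfl fun b _ => by ring

lemma sum_sub_smul_one_mul_of_diag_eq_zero [Fintype ι] [DecidableEq ι] (A : Matrix ι ι ℝ) (τ : ℝ)
    {D : ι → ι → ℝ} (hD : ∀ i, D i i = 0) :
    ∑ i, ∑ j, (A - τ • 1) i j * D i j = ∑ i, ∑ j, A i j * D i j := by
  simp [sub_mul, one_apply, Finset.sum_sub_distrib, hD]

def IsUniversallyCompletable (B S : ι → ι → Prop) (p : ι → κ → ℝ) : Prop :=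
  ∀ (m : ℕ) (q : ι → Fin m → ℝ),
    (∀ i, q i ⬝ᵥ q i = p i ⬝ᵥ p i) →
    (∀ i j, B i j → q i ⬝ᵥ q j = p i ⬝ᵥ p j) →
    (∀ i j, S i j → q i ⬝ᵥ q j ≤ p i ⬝ᵥ p j) →
    ∀ i j, q i ⬝ᵥ q j = p i ⬝ᵥ p j

lemma IsUniversallyCompletable.eq_zero [Fintype ι] [DecidableEq κ] {B S : ι → ι → Prop}
    {p : ι → κ → ℝ} (h : IsUniversallyCompletable B S p) {R : Matrix κ κ ℝ}
    (hR : R.IsSymm) (hcol : ∀ w, R *ᵥ w ∈ Submodule.span ℝ (Set.range p))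
    (hzero : ∀ i j, (i = j ∨ B i j ∨ S i j) → p i ⬝ᵥ R *ᵥ p j = 0) : R = 0 := by
  obtain ⟨ε, hε, hpsd⟩ := exists_pos_posSemidef_one_add_smul (isHermitian_iff_isSymm.mpr hR)
  obtain ⟨m, v, hv⟩ := posSemidef_iff_eq_sum_vecMulVec.mp hpsd
  simp only [star_trivial] at hv
  have hq : ∀ i j, (fun k => p i ⬝ᵥ v k) ⬝ᵥ (fun k => p j ⬝ᵥ v k) =
      p i ⬝ᵥ p j + ε * (p i ⬝ᵥ R *ᵥ p j) := fun i j => by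
    rw [← dotProduct_sum_vecMulVec_mulVec, ← hv, add_mulVec, one_mulVec, smul_mulVec,
      dotProduct_add, dotProduct_smul, smul_eq_mul]
  have hpRp : ∀ i j, p i ⬝ᵥ R *ᵥ p j = 0 := fun i j => by
    have := h m (fun i k => p i ⬝ᵥ v k)
      (fun i => by rw [hq, hzero i i (.inl rfl), mul_zero, add_zero])
      (fun i j hB => by rw [hq, hzero i j (.inr (.inl hB)), mul_zero, add_zero])
      (fun i j hS => by rw [hq, hzero i j (.inr (.inr hS)), mul_zero, add_zero]) i j
    rw [hq, add_eq_left] at this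
    exact (mul_eq_zero.mp this).resolve_left hε.ne'
  exact eq_zero_of_forall_dotProduct_mulVec_eq_zero hR hcol hpRp

variable [Fintype ι] [DecidableEq ι] (G : SimpleGraph ι) [DecidableRel G.Adj]

lemma sum_dotProduct_mulVec_col_eq_sum_adjMatrix_mul {τ : ℝ} {p : ι → κ → ℝ}
    (hp : G.adjMatrix ℝ * of p = τ • of p) [Fintype μ] {q : ι → μ → ℝ}
    (hdiag : ∀ i, q i ⬝ᵥ q i = p i ⬝ᵥ p i) :
    ∑ k, (fun i => q i k) ⬝ᵥ (G.adjMatrix ℝ - τ • 1) *ᵥ (fun i => q i k) =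
      ∑ i, ∑ j, G.adjMatrix ℝ i j * (q i ⬝ᵥ q j - p i ⬝ᵥ p j) := by
  have hpcol : ∀ x, (G.adjMatrix ℝ - τ • 1) *ᵥ (fun i => p i x) = 0 := fun x => by
    rw [sub_mulVec, smul_mulVec, one_mulVec, sub_eq_zero]
    exact funext fun i => congrFun (congrFun hp i) x
  have hp0 : ∑ i, ∑ j, (G.adjMatrix ℝ - τ • 1) i j * (p i ⬝ᵥ p j) = 0 := by
    rw [sum_mul_dotProduct_eq_sum_dotProduct_mulVec]
    simp [hpcol]
  rw [← sum_mul_dotProduct_eq_sum_dotProduct_mulVec, ← sub_zero (∑ i, ∑ j, _), ← hp0,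
    ← sum_sub_smul_one_mul_of_diag_eq_zero (G.adjMatrix ℝ) τ (by simp [hdiag])]
  simp only [mul_sub, Finset.sum_sub_distrib]

lemma mulVec_col_eq_smul_and_dotProduct_eq_of_adj {τ : ℝ}
    (hτ : (G.adjMatrix ℝ - τ • 1).PosSemidef) {p : ι → κ → ℝ}
    (hp : G.adjMatrix ℝ * of p = τ • of p) [Fintype μ] {q : ι → μ → ℝ}
    (hdiag : ∀ i, q i ⬝ᵥ q i = p i ⬝ᵥ p i) (hadj : ∀ i j, G.Adj i j → q i ⬝ᵥ q j ≤ p i ⬝ᵥ p j) :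
    (∀ k, G.adjMatrix ℝ *ᵥ (fun i => q i k) = τ • fun i => q i k) ∧
      ∀ i j, G.Adj i j → q i ⬝ᵥ q j = p i ⬝ᵥ p j := by
  have hsum := sum_dotProduct_mulVec_col_eq_sum_adjMatrix_mul G hp hdiag
  have hcol : ∀ k, 0 ≤ (fun i => q i k) ⬝ᵥ (G.adjMatrix ℝ - τ • 1) *ᵥ (fun i => q i k) :=
    fun k => hτ.dotProduct_mulVec_nonneg _
  have hterm : ∀ i j, G.adjMatrix ℝ i j * (q i ⬝ᵥ q j - p i ⬝ᵥ p j) ≤ 0 := fun i j => by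
    rw [SimpleGraph.adjMatrix_apply]
    split_ifs with h
    · simpa using hadj i j h
    · simp
  have hcol0 : ∑ k, (fun i => q i k) ⬝ᵥ (G.adjMatrix ℝ - τ • 1) *ᵥ (fun i => q i k) = 0 :=
    le_antisymm (hsum ▸ Finset.sum_nonpos fun i _ => Finset.sum_nonpos fun j _ => hterm i j)
      (Finset.sum_nonneg fun k _ => hcol k)
  refine ⟨fun k => ?_, fun i j h => ?_⟩
  · have hk := (Finset.sum_eq_zero_iff_of_nonneg fun k _ => hcol k).mp hcol0 k (Finset.mem_univ _)
    have hker := (hτ.dotProduct_mulVec_zero_iff _).mp hk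
    rwa [sub_mulVec, smul_mulVec, one_mulVec, sub_eq_zero] at hker
  · rw [hcol0, eq_comm] at hsum
    have hi := (Finset.sum_eq_zero_iff_of_nonpos fun i _ => Finset.sum_nonpos fun j _ =>
      hterm i j).mp hsum i (Finset.mem_univ _)
    have hij := (Finset.sum_eq_zero_iff_of_nonpos fun j _ => hterm i j).mp hi j (Finset.mem_univ _)
    simpa [SimpleGraph.adjMatrix_apply, h, sub_eq_zero] using hij

lemma isUniversallyCompletable_of_forall_eq_zero [DecidableEq κ] {τ : ℝ}
    (hτ : (G.adjMatrix ℝ - τ • 1).PosSemidef) {p : ι → κ → ℝ}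
    (hp : G.adjMatrix ℝ * of p = τ • of p)
    (hspan : ∀ v, G.adjMatrix ℝ *ᵥ v = τ • v → ∃ w, of p *ᵥ w = v)
    {B S : ι → ι → Prop} (hadj : ∀ i j, G.Adj i j → B i j ∨ S i j)
    (hR : ∀ R : Matrix κ κ ℝ, R.IsSymm → (∀ w, R *ᵥ w ∈ Submodule.span ℝ (Set.range p)) →
      (∀ i j, (i = j ∨ G.Adj i j) → p i ⬝ᵥ R *ᵥ p j = 0) → R = 0) :
    IsUniversallyCompletable B S p := by
  intro m q hdiag hB hS
  obtain ⟨heig, htight⟩ := mulVec_col_eq_smul_and_dotProduct_eq_of_adj G hτ hp hdiag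
    fun i j h => (hadj i j h).elim (fun h => (hB i j h).le) (hS i j)
  choose c hc using fun k => hspan _ (heig k)
  have hq : ∀ i, q i = fun k => p i ⬝ᵥ c k := fun i => funext fun k => (congrFun (hc k) i).symm
  set N := ∑ k, vecMulVec (c k) (c k)
  have hN : (N - 1).IsSymm := by
    simp [N, IsSymm, transpose_sub, transpose_sum, transpose_vecMulVec]
  obtain ⟨R, hRsymm, hRcol, hRp⟩ := exists_isSymm_mulVec_mem_span_dotProduct_mulVec_eq p hN
  have hRp' : ∀ i j, p i ⬝ᵥ R *ᵥ p j = q i ⬝ᵥ q j - p i ⬝ᵥ p j := fun i j => by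
    rw [hRp, sub_mulVec, one_mulVec, dotProduct_sub, dotProduct_sum_vecMulVec_mulVec, hq, hq]
  have hR0 := hR R hRsymm hRcol fun i j hij => by
    rw [hRp', sub_eq_zero]
    rcases hij with rfl | h
    · exact hdiag i
    · exact htight i j h
  intro i j
  rw [← sub_eq_zero, ← hRp', hR0, zero_mulVec, dotProduct_zero]

end

theorem stmt_3_general {n d : ℕ} (G : SimpleGraph (Fin n)) [DecidableRel G.Adj] (τ : ℝ)
    (hτpsd : (G.adjMatrix ℝ - τ • 1).PosSemidef)
    (B S : Fin n → Fin n → Prop)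
    (hpart : ∀ i j, G.Adj i j ↔ (B i j ∨ S i j))
    (p : Fin n → Fin d → ℝ)
    (hAP : G.adjMatrix ℝ * Matrix.of p = τ • Matrix.of p)
    (hspan : ∀ v : Fin n → ℝ, (G.adjMatrix ℝ).mulVec v = τ • v →
        ∃ w : Fin d → ℝ, (Matrix.of p).mulVec w = v) :
    (∀ (m : ℕ) (q : Fin n → Fin m → ℝ),
        (∀ i, q i ⬝ᵥ q i = p i ⬝ᵥ p i) →
        (∀ i j, B i j → q i ⬝ᵥ q j = p i ⬝ᵥ p j) →
        (∀ i j, S i j → q i ⬝ᵥ q j ≤ p i ⬝ᵥ p j) →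
        ∀ i j, q i ⬝ᵥ q j = p i ⬝ᵥ p j)
    ↔
    (∀ R : Matrix (Fin d) (Fin d) ℝ, R.IsSymm →
        (∀ w : Fin d → ℝ, R.mulVec w ∈ Submodule.span ℝ (Set.range p)) →
        (∀ i j, (i = j ∨ G.Adj i j) → p i ⬝ᵥ R.mulVec (p j) = 0) →
        R = 0) := by
  refine ⟨fun hUC R hR hcol hzero => ?_, fun hR => ?_⟩
  · refine IsUniversallyCompletable.eq_zero hUC hR hcol fun i j hij => hzero i j ?_
    exact hij.imp_right (hpart i j).mpr
  · exact isUniversallyCompletable_of_forall_eq_zero G hτpsd hAP hspan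
      (fun i j => (hpart i j).mp) hR

theorem stmt_3 {n d : ℕ} (G : SimpleGraph (Fin n)) [DecidableRel G.Adj] (τ : ℝ)
    (hτeig : ∃ v : Fin n → ℝ, v ≠ 0 ∧ (G.adjMatrix ℝ).mulVec v = τ • v)
    (hτpsd : (G.adjMatrix ℝ - τ • 1).PosSemidef)
    (B S : Fin n → Fin n → Prop)
    (hBsymm : Symmetric B) (hSsymm : Symmetric S)
    (hpart : ∀ i j, G.Adj i j ↔ (B i j ∨ S i j))
    (hBS : ∀ i j, ¬(B i j ∧ S i j))
    (p : Fin n → Fin d → ℝ)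
    (hAP : G.adjMatrix ℝ * Matrix.of p = τ • Matrix.of p)
    (hspan : ∀ v : Fin n → ℝ, (G.adjMatrix ℝ).mulVec v = τ • v →
        ∃ w : Fin d → ℝ, (Matrix.of p).mulVec w = v) :
    (∀ (m : ℕ) (q : Fin n → Fin m → ℝ),
        (∀ i, q i ⬝ᵥ q i = p i ⬝ᵥ p i) →
        (∀ i j, B i j → q i ⬝ᵥ q j = p i ⬝ᵥ p j) →
        (∀ i j, S i j → q i ⬝ᵥ q j ≤ p i ⬝ᵥ p j) →
        ∀ i j, q i ⬝ᵥ q j = p i ⬝ᵥ p j)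
    ↔
    (∀ R : Matrix (Fin d) (Fin d) ℝ, R.IsSymm →
        (∀ w : Fin d → ℝ, R.mulVec w ∈ Submodule.span ℝ (Set.range p)) →
        (∀ i j, (i = j ∨ G.Adj i j) → p i ⬝ᵥ R.mulVec (p j) = 0) →
        R = 0) :=
  stmt_3_general G τ hτpsd B S hpart p hAP hspan
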